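/- Fix ω > 0 and (δr₀, δv₀) ∈ ℝ³ × ℝ³. If γ : ℝ → ℝ³ is twice differentiable, its components (x, y, z) = γ satisfy the Clohessy–Wiltshire equations x'' = 3ω²x + 2ωy', y'' = −2ωx', z'' = −ω²z on ℝ, and γ(0) = δr₀, γ'(0) = δv₀, then for every τ ∈ ℝ one has γ(τ) = M(τ)δr₀ + N(τ)δv₀ and γ'(τ) = S(τ)δr₀ + T(τ)δv₀. (Uniqueness of the solution of the linear Clohessy–Wiltshire system: the matrices M, N, S, T form its state transition matrix.) -/

import Mathlib

/-!
The Hill equations are a linear system with constant coefficients for the phase `(r, r')`,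
with vector field `(r, v) ↦ (v, A r + B v)`. Differentiating entrywise shows that the block
matrix `[[M, N], [S, T]]` solves the same system and is the identity at `τ = 0`. Hence the
phase curve of `γ` and `τ ↦ [[M, N], [S, T]] (δr₀, δv₀)` solve one linear ODE with one initial
value, and uniqueness for Lipschitz vector fields identifies them.
-/

open Real Matrix

/-- Clohessy–Wiltshire state-transition block `M(τ)`. -/
noncomputable def Mcw (ω τ : ℝ) : Matrix (Fin 3) (Fin 3) ℝ :=
  !![4 - 3 * Real.cos (ω * τ), 0, 0;
     6 * (Real.sin (ω * τ) - ω * τ), 1, 0;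
     0, 0, Real.cos (ω * τ)]

/-- Clohessy–Wiltshire state-transition block `N(τ)`. -/
noncomputable def Ncw (ω τ : ℝ) : Matrix (Fin 3) (Fin 3) ℝ :=
  !![Real.sin (ω * τ) / ω, 2 * (1 - Real.cos (ω * τ)) / ω, 0;
     -(2 * (1 - Real.cos (ω * τ)) / ω), 4 * Real.sin (ω * τ) / ω - 3 * τ, 0;
     0, 0, Real.sin (ω * τ) / ω]

/-- Clohessy–Wiltshire state-transition block `S(τ)` (with corrected sign of the (2,1) entry). -/
noncomputable def Scw (ω τ : ℝ) : Matrix (Fin 3) (Fin 3) ℝ :=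
  !![3 * ω * Real.sin (ω * τ), 0, 0;
     6 * ω * (Real.cos (ω * τ) - 1), 0, 0;
     0, 0, -(ω * Real.sin (ω * τ))]

/-- Clohessy–Wiltshire state-transition block `T(τ)`. -/
noncomputable def Tcw (ω τ : ℝ) : Matrix (Fin 3) (Fin 3) ℝ :=
  !![Real.cos (ω * τ), 2 * Real.sin (ω * τ), 0;
     -(2 * Real.sin (ω * τ)), 4 * Real.cos (ω * τ) - 3, 0;
     0, 0, Real.cos (ω * τ)]

-- The Hill equations read `r'' = Acw ω r + Bcw ω r'`.
def Acw (ω : ℝ) : Matrix (Fin 3) (Fin 3) ℝ :=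
  !![3 * ω ^ 2, 0, 0;
     0, 0, 0;
     0, 0, -ω ^ 2]

def Bcw (ω : ℝ) : Matrix (Fin 3) (Fin 3) ℝ :=
  !![0, 2 * ω, 0;
     -(2 * ω), 0, 0;
     0, 0, 0]

def cwVectorField (ω : ℝ) :
    ((Fin 3 → ℝ) × (Fin 3 → ℝ)) →ₗ[ℝ] (Fin 3 → ℝ) × (Fin 3 → ℝ) :=
  (LinearMap.snd ℝ _ _).prod
    ((Acw ω).mulVecLin ∘ₗ LinearMap.fst ℝ _ _ + (Bcw ω).mulVecLin ∘ₗ LinearMap.snd ℝ _ _)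

theorem cwVectorField_apply (ω : ℝ) (p : (Fin 3 → ℝ) × (Fin 3 → ℝ)) :
    cwVectorField ω p = (p.2, Acw ω *ᵥ p.1 + Bcw ω *ᵥ p.2) :=
  rfl

theorem eq_of_hasDerivAt_linearMap {E : Type*} [NormedAddCommGroup E] [NormedSpace ℝ E]
    [FiniteDimensional ℝ E] (L : E →ₗ[ℝ] E) {f g : ℝ → E}
    (hf : ∀ t, HasDerivAt f (L (f t)) t) (hg : ∀ t, HasDerivAt g (L (g t)) t) {t₀ : ℝ}
    (h : f t₀ = g t₀) : f = g :=
  ODE_solution_unique_univ (v := fun _ => L) (s := fun _ => Set.univ)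
    (fun _ => (LinearMap.toContinuousLinearMap L).lipschitz.lipschitzOnWith)
    (fun t => ⟨hf t, trivial⟩) (fun t => ⟨hg t, trivial⟩) h

theorem hasDerivAt_mulVec {m n : Type*} [Fintype m] [Fintype n] {A : ℝ → Matrix m n ℝ}
    {A' : Matrix m n ℝ} {t : ℝ} (hA : ∀ i j, HasDerivAt (fun s => A s i j) (A' i j) t)
    (v : n → ℝ) : HasDerivAt (fun s => A s *ᵥ v) (A' *ᵥ v) t :=
  hasDerivAt_pi.2 fun i => HasDerivAt.fun_sum fun j _ => (hA i j).mul_const (v j)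

theorem hasDerivAt_position_velocity {ι : Type*} [Fintype ι] {γ : ℝ → ι → ℝ}
    (hd1 : ∀ i, Differentiable ℝ fun t => γ t i)
    (hd2 : ∀ i, Differentiable ℝ (deriv fun t => γ t i)) (t : ℝ) :
    HasDerivAt (fun t => (γ t, fun i => deriv (fun s => γ s i) t))
      (fun i => deriv (fun s => γ s i) t, fun i => deriv (deriv fun s => γ s i) t) t :=
  (hasDerivAt_pi.2 fun i => (hd1 i t).hasDerivAt).prodMk
    (hasDerivAt_pi.2 fun i => (hd2 i t).hasDerivAt)

section Transition

variable (ω t : ℝ)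

theorem hasDerivAt_Mcw_apply (i j : Fin 3) :
    HasDerivAt (fun s => Mcw ω s i j) (Scw ω t i j) t := by
  fin_cases i <;> fin_cases j <;> simp [Mcw, Scw] <;>
    refine (DifferentiableAt.hasDerivAt (by fun_prop)).congr_deriv ?_ <;>
    simp (disch := fun_prop) <;> ring

theorem hasDerivAt_Ncw_apply (hω : ω ≠ 0) (i j : Fin 3) :
    HasDerivAt (fun s => Ncw ω s i j) (Tcw ω t i j) t := by
  fin_cases i <;> fin_cases j <;> simp [Ncw, Tcw] <;>
    refine (DifferentiableAt.hasDerivAt (by fun_prop)).congr_deriv ?_ <;>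
    simp (disch := fun_prop) <;> field_simp

theorem hasDerivAt_Scw_apply (i j : Fin 3) :
    HasDerivAt (fun s => Scw ω s i j) ((Acw ω * Mcw ω t + Bcw ω * Scw ω t) i j) t := by
  fin_cases i <;> fin_cases j <;> simp [Scw, Acw, Bcw, Mcw] <;>
    refine (DifferentiableAt.hasDerivAt (by fun_prop)).congr_deriv ?_ <;>
    simp (disch := fun_prop) <;> ring

theorem hasDerivAt_Tcw_apply (hω : ω ≠ 0) (i j : Fin 3) :
    HasDerivAt (fun s => Tcw ω s i j) ((Acw ω * Ncw ω t + Bcw ω * Tcw ω t) i j) t := by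
  fin_cases i <;> fin_cases j <;> simp [Tcw, Acw, Bcw, Ncw] <;>
    refine (DifferentiableAt.hasDerivAt (by fun_prop)).congr_deriv ?_ <;>
    simp (disch := fun_prop) <;> field_simp <;> ring

end Transition

theorem hasDerivAt_cwTransition {ω : ℝ} (hω : ω ≠ 0) (r v : Fin 3 → ℝ) (t : ℝ) :
    HasDerivAt (fun s => (Mcw ω s *ᵥ r + Ncw ω s *ᵥ v, Scw ω s *ᵥ r + Tcw ω s *ᵥ v))
      (cwVectorField ω (Mcw ω t *ᵥ r + Ncw ω t *ᵥ v, Scw ω t *ᵥ r + Tcw ω t *ᵥ v)) t := by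
  have hpos := (hasDerivAt_mulVec (hasDerivAt_Mcw_apply ω t) r).fun_add
    (hasDerivAt_mulVec (hasDerivAt_Ncw_apply ω t hω) v)
  have hvel := (hasDerivAt_mulVec (hasDerivAt_Scw_apply ω t) r).fun_add
    (hasDerivAt_mulVec (hasDerivAt_Tcw_apply ω t hω) v)
  convert hpos.prodMk hvel using 1
  rw [cwVectorField_apply, add_mulVec, add_mulVec, mulVec_add, mulVec_add]
  simp only [mulVec_mulVec]
  exact Prod.ext rfl (add_add_add_comm _ _ _ _)

theorem Mcw_zero (ω : ℝ) : Mcw ω 0 = 1 := by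
  ext i j; fin_cases i <;> fin_cases j <;> norm_num [Mcw]

theorem Ncw_zero (ω : ℝ) : Ncw ω 0 = 0 := by
  ext i j; fin_cases i <;> fin_cases j <;> simp [Ncw]

theorem Scw_zero (ω : ℝ) : Scw ω 0 = 0 := by
  ext i j; fin_cases i <;> fin_cases j <;> simp [Scw]

theorem Tcw_zero (ω : ℝ) : Tcw ω 0 = 1 := by
  ext i j; fin_cases i <;> fin_cases j <;> norm_num [Tcw]

/-- Uniqueness of solutions of the Clohessy–Wiltshire system: if `γ` is twice
differentiable, satisfies the CW equations on `ℝ`, and has `γ(0) = δr₀`, `γ'(0) = δv₀`, then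
`γ(τ) = M(τ)δr₀ + N(τ)δv₀` and `γ'(τ) = S(τ)δr₀ + T(τ)δv₀` for all `τ`. -/
theorem cw_solution_unique (ω : ℝ) (hω : 0 < ω) (δr₀ δv₀ : Fin 3 → ℝ)
    (γ : ℝ → Fin 3 → ℝ)
    (hd1 : ∀ i : Fin 3, Differentiable ℝ fun t => γ t i)
    (hd2 : ∀ i : Fin 3, Differentiable ℝ (deriv fun t => γ t i))
    (hx : ∀ t : ℝ, deriv (deriv fun s => γ s 0) t =
      3 * ω ^ 2 * γ t 0 + 2 * ω * deriv (fun s => γ s 1) t)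
    (hy : ∀ t : ℝ, deriv (deriv fun s => γ s 1) t = -(2 * ω * deriv (fun s => γ s 0) t))
    (hz : ∀ t : ℝ, deriv (deriv fun s => γ s 2) t = -(ω ^ 2 * γ t 2))
    (h0 : γ 0 = δr₀)
    (h0' : (fun i => deriv (fun t => γ t i) 0) = δv₀) :
    ∀ τ : ℝ,
      γ τ = (Mcw ω τ).mulVec δr₀ + (Ncw ω τ).mulVec δv₀ ∧
      (fun i => deriv (fun t => γ t i) τ) = (Scw ω τ).mulVec δr₀ + (Tcw ω τ).mulVec δv₀ := by
  have hγ (t : ℝ) : HasDerivAt (fun t => (γ t, fun i => deriv (fun s => γ s i) t))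
      (cwVectorField ω (γ t, fun i => deriv (fun s => γ s i) t)) t := by
    convert hasDerivAt_position_velocity hd1 hd2 t using 1
    ext i <;> fin_cases i <;>
      simp [cwVectorField_apply, Acw, Bcw, hx, hy, hz, dotProduct, Fin.sum_univ_three]
  have heq := eq_of_hasDerivAt_linearMap _ hγ (hasDerivAt_cwTransition hω.ne' δr₀ δv₀)
    (t₀ := 0) (by simp [Mcw_zero, Ncw_zero, Scw_zero, Tcw_zero, h0, h0'])
  exact fun τ => Prod.ext_iff.1 (congrFun heq τ)
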